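/- arXiv:2410.01217 — 2 statements merged into one kernel-verified Lean document; each statement's English description precedes it below -/
import Mathlib

section
/- A word of the form 0^a 1 0^b (a single 1 surrounded by a zeros and b zeros) is Ulam if and only if the binomial coefficient C(a+b, a) is odd. -/
/-- Ulam words with fuel bounding the recursion depth (fuel ≥ length suffices). -/
def UlamN : ℕ → List Bool → Prop
  | 0, _ => False
  | n + 1, w =>
    w = [false] ∨ w = [true] ∨
      ∃! p : List Bool × List Bool,
        p.1 ≠ [] ∧ p.2 ≠ [] ∧ UlamN n p.1 ∧ UlamN n p.2 ∧ p.1 ≠ p.2 ∧ p.1 ++ p.2 = w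

/-- A word over {0,1} (`false` = 0, `true` = 1) is Ulam. -/
def IsUlam (w : List Bool) : Prop := UlamN w.length w

/-- The integer whose binary representation (most significant digit first) is `w`. -/
def binVal (w : List Bool) : ℕ := w.foldl (fun acc b => 2 * acc + b.toNat) 0

/-!
A word without a `1` is Ulam only if it is `0`: two distinct Ulam factors of such a word would
both have to be `0`. Hence in an Ulam split of a word containing a single `1`, one factor is the
letter `0`, cut off at one end. So for `a, b ≥ 1` the word `0^a 1 0^b` is Ulam iff exactly one of
`0^(a-1) 1 0^b` and `0^a 1 0^(b-1)` is, which is Pascal's rule for `C(a+b, a)` modulo 2.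
-/

def IsDistinctSplit (P : List Bool → Prop) (w : List Bool) (p : List Bool × List Bool) : Prop :=
  p.1 ≠ [] ∧ p.2 ≠ [] ∧ P p.1 ∧ P p.2 ∧ p.1 ≠ p.2 ∧ p.1 ++ p.2 = w

/-- `UlamN (n + 1)` is definitionally `UlamStep (UlamN n)`. -/
def UlamStep (P : List Bool → Prop) (w : List Bool) : Prop :=
  w = [false] ∨ w = [true] ∨ ∃! p, IsDistinctSplit P w p

theorem ulamStep_congr {P Q : List Bool → Prop} {w : List Bool}
    (h : ∀ u, u.length < w.length → (P u ↔ Q u)) : UlamStep P w ↔ UlamStep Q w := by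
  refine or_congr_right <| or_congr_right <| existsUnique_congr fun p => ?_
  unfold IsDistinctSplit
  by_cases hne : p.1 ≠ [] ∧ p.2 ≠ [] ∧ p.1 ++ p.2 = w
  · obtain ⟨h1, h2, rfl⟩ := hne
    have l1 : p.1.length < (p.1 ++ p.2).length := by simp [List.length_pos_iff.mpr h2]
    have l2 : p.2.length < (p.1 ++ p.2).length := by simp [List.length_pos_iff.mpr h1]
    rw [h _ l1, h _ l2]
  · tauto

theorem not_ulamStep_nil (P : List Bool → Prop) : ¬ UlamStep P [] := by
  rintro (h | h | ⟨p, ⟨h1, -, -, -, -, h⟩, -⟩)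
  exacts [List.cons_ne_nil _ _ h.symm, List.cons_ne_nil _ _ h.symm,
    h1 (List.append_eq_nil_iff.mp h).1]

theorem not_ulamN_nil : ∀ n, ¬ UlamN n []
  | 0 => id
  | n + 1 => not_ulamStep_nil (UlamN n)

theorem ulamN_congr {n m : ℕ} {w : List Bool} (hn : w.length ≤ n) (hm : w.length ≤ m) :
    UlamN n w ↔ UlamN m w := by
  induction n generalizing m w with
  | zero =>
    rw [List.length_eq_zero_iff.mp (Nat.le_zero.mp hn)]
    exact iff_of_false (not_ulamN_nil 0) (not_ulamN_nil m)
  | succ n ih =>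
    cases m with
    | zero =>
      rw [List.length_eq_zero_iff.mp (Nat.le_zero.mp hm)]
      exact iff_of_false (not_ulamN_nil _) (not_ulamN_nil 0)
    | succ m => exact ulamStep_congr fun u hu => ih (by omega) (by omega)

theorem isUlam_iff_ulamStep {w : List Bool} : IsUlam w ↔ UlamStep IsUlam w := by
  rcases List.eq_nil_or_concat' w with rfl | ⟨u, x, rfl⟩
  · exact iff_of_false (not_ulamN_nil 0) (not_ulamStep_nil IsUlam)
  · rw [IsUlam, List.length_append, List.length_singleton]
    exact ulamStep_congr fun v hv => ulamN_congr (by simpa using hv) le_rfl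

theorem isUlam_singleton_false : IsUlam [false] := Or.inl rfl

theorem eq_singleton_false_of_isUlam {w : List Bool} (hw : IsUlam w) (ht : true ∉ w) :
    w = [false] := by
  induction hn : w.length using Nat.strong_induction_on generalizing w with
  | _ n ih =>
    rcases isUlam_iff_ulamStep.mp hw with rfl | rfl | ⟨p, ⟨h1, h2, h3, h4, hne, rfl⟩, -⟩
    · rfl
    · simp at ht
    · exfalso
      simp only [List.mem_append, not_or] at ht
      refine hne ((ih _ ?_ h3 ht.1 rfl).trans (ih _ ?_ h4 ht.2 rfl).symm) <;>
        simp [← hn, List.length_pos_iff.mpr h1, List.length_pos_iff.mpr h2]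

theorem existsUnique_or_iff_xor {α : Type*} {A B : α → Prop}
    (hA : ∀ x y, A x → A y → x = y) (hB : ∀ x y, B x → B y → x = y)
    (hAB : ∀ x, A x → ¬ B x) : (∃! x, A x ∨ B x) ↔ Xor (∃ x, A x) (∃ x, B x) := by
  constructor
  · rintro ⟨x, hx | hx, huniq⟩
    · exact Or.inl ⟨⟨x, hx⟩, fun ⟨y, hy⟩ => hAB x hx (huniq y (Or.inr hy) ▸ hy)⟩
    · exact Or.inr ⟨⟨x, hx⟩, fun ⟨y, hy⟩ => hAB y hy (huniq y (Or.inl hy) ▸ hx)⟩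
  · rintro (⟨⟨x, hx⟩, hnB⟩ | ⟨⟨x, hx⟩, hnA⟩)
    · exact ⟨x, Or.inl hx, fun y hy => hy.elim (hA y x · hx) fun hy => (hnB ⟨y, hy⟩).elim⟩
    · exact ⟨x, Or.inr hx, fun y hy =>
        hy.elim (fun hy => (hnA ⟨y, hy⟩).elim) (hB y x · hx)⟩

theorem isDistinctSplit_iff_of_count_true_eq_one {w : List Bool} (hw : w.count true = 1)
    (p : List Bool × List Bool) :
    IsDistinctSplit IsUlam w p ↔
      (p.1 = [false] ∧ false :: p.2 = w ∧ IsUlam p.2) ∨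
        (p.2 = [false] ∧ p.1 ++ [false] = w ∧ IsUlam p.1) := by
  constructor
  · rintro ⟨-, -, h1, h2, -, rfl⟩
    rw [List.count_append] at hw
    rcases Nat.eq_zero_or_pos (p.1.count true) with hc | hc
    · have e := eq_singleton_false_of_isUlam h1 (List.count_eq_zero.mp hc)
      exact Or.inl ⟨e, by rw [e]; rfl, h2⟩
    · have e := eq_singleton_false_of_isUlam h2 (List.count_eq_zero.mp (by omega))
      exact Or.inr ⟨e, by rw [e], h1⟩
  · rintro (⟨e, rfl, h⟩ | ⟨e, rfl, h⟩)
    · rw [List.count_cons_of_ne (by decide)] at hw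
      refine ⟨by simp [e], ?_, by rw [e]; exact isUlam_singleton_false, h, ?_, by rw [e]; rfl⟩
      · intro h; simp [h] at hw
      · intro h; simp [← h, e] at hw
    · rw [List.count_append] at hw
      refine ⟨?_, by simp [e], h, by rw [e]; exact isUlam_singleton_false, ?_, by rw [e]⟩
      · intro h; simp [h] at hw
      · intro h; simp [h, e] at hw

theorem isUlam_iff_xor_of_count_true_eq_one {w : List Bool} (hw : w.count true = 1)
    (hw' : w ≠ [true]) :
    IsUlam w ↔
      Xor (∃ v, false :: v = w ∧ IsUlam v) (∃ u, u ++ [false] = w ∧ IsUlam u) := by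
  have hw0 : w ≠ [false] := by rintro rfl; simp at hw
  rw [isUlam_iff_ulamStep, UlamStep, or_iff_right hw0, or_iff_right hw',
    existsUnique_congr (isDistinctSplit_iff_of_count_true_eq_one hw),
    existsUnique_or_iff_xor]
  · simp only [Prod.exists, exists_and_left, exists_eq_left]
  · rintro ⟨_, _⟩ ⟨_, _⟩ ⟨rfl, h, -⟩ ⟨rfl, rfl, -⟩
    simp_all
  · rintro ⟨_, _⟩ ⟨_, _⟩ ⟨rfl, h, -⟩ ⟨rfl, h', -⟩
    simpa using List.append_cancel_right (h.trans h'.symm)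
  · rintro ⟨_, _⟩ ⟨rfl, rfl, -⟩ ⟨rfl, -, -⟩
    simp at hw

def singleTrue (a b : ℕ) : List Bool := List.replicate a false ++ [true] ++ List.replicate b false

theorem count_true_singleTrue (a b : ℕ) : (singleTrue a b).count true = 1 := by
  simp [singleTrue, List.count_replicate]

theorem exists_false_cons_eq_singleTrue_iff (P : List Bool → Prop) (a b : ℕ) :
    (∃ v, false :: v = singleTrue a b ∧ P v) ↔
      ∃ a', a = a' + 1 ∧ P (singleTrue a' b) := by
  cases a <;> simp [singleTrue, List.replicate_succ]

theorem exists_append_false_eq_singleTrue_iff (P : List Bool → Prop) (a b : ℕ) :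
    (∃ u, u ++ [false] = singleTrue a b ∧ P u) ↔
      ∃ b', b = b' + 1 ∧ P (singleTrue a b') := by
  cases b with
  | zero => simp [singleTrue]
  | succ b =>
    have h : singleTrue a (b + 1) = singleTrue a b ++ [false] := by
      simp [singleTrue, List.replicate_succ']
    simp [h]

theorem isUlam_singleTrue_iff_xor {a b : ℕ} (h : a + b ≠ 0) :
    IsUlam (singleTrue a b) ↔
      Xor (∃ a', a = a' + 1 ∧ IsUlam (singleTrue a' b))
        (∃ b', b = b' + 1 ∧ IsUlam (singleTrue a b')) := by
  have hne : singleTrue a b ≠ [true] := fun he => by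
    have := congrArg List.length he
    simp only [singleTrue, List.length_append, List.length_replicate, List.length_singleton] at this
    omega
  rw [isUlam_iff_xor_of_count_true_eq_one (count_true_singleTrue a b) hne,
    exists_false_cons_eq_singleTrue_iff, exists_append_false_eq_singleTrue_iff]

theorem isUlam_singleTrue_zero_left (b : ℕ) : IsUlam (singleTrue 0 b) := by
  induction b with
  | zero => exact Or.inr (Or.inl rfl)
  | succ b ih => rw [isUlam_singleTrue_iff_xor (by omega)]; simpa using ih

theorem isUlam_singleTrue_zero_right (a : ℕ) : IsUlam (singleTrue a 0) := by
  induction a with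
  | zero => exact Or.inr (Or.inl rfl)
  | succ a ih => rw [isUlam_singleTrue_iff_xor (by omega), xor_comm]; simpa using ih

theorem odd_choose_succ_succ_iff_xor (a b : ℕ) :
    Odd ((a + 1 + (b + 1)).choose (a + 1)) ↔
      Xor (Odd ((a + (b + 1)).choose a)) (Odd ((a + 1 + b).choose (a + 1))) := by
  rw [show a + 1 + (b + 1) = a + b + 1 + 1 by omega, Nat.choose_succ_succ',
    show a + (b + 1) = a + b + 1 by omega, show a + 1 + b = a + b + 1 by omega]
  simp only [xor_def, Nat.odd_iff]
  omega

theorem ulam_one_one (a b : ℕ) :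
    IsUlam (List.replicate a false ++ [true] ++ List.replicate b false) ↔
      Odd ((a + b).choose a) := by
  change IsUlam (singleTrue a b) ↔ _
  induction a generalizing b with
  | zero => simpa using isUlam_singleTrue_zero_left b
  | succ a iha =>
    induction b with
    | zero => simpa using isUlam_singleTrue_zero_right (a + 1)
    | succ b ihb =>
      rw [isUlam_singleTrue_iff_xor (by omega), odd_choose_succ_succ_iff_xor, ← iha, ← ihb]
      simp
end

section
/- For every n ≥ 2, the smallest binary value of an Ulam word of length n is 1 (attained by 0^{n-1}1) and the largest is 2^n - 2 (attained by 1^{n-1}0). -/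
/-!
A splitting of `0^n` (or `1^n`) into two Ulam words uses only constant words, and the only
constant Ulam words are the letters themselves; so by induction `0^n` and `1^n` are not Ulam for
`n ≥ 2`, while `0^(n-1) 1` and `1^(n-1) 0` are Ulam, their only Ulam splitting being
`0 · 0^(n-2) 1` (resp. `1 · 1^(n-2) 0`). Hence an Ulam word of length `n ≥ 2` contains both
letters, so its value lies between `1` and `2^n - 2`, and both bounds are attained.
-/

def IsDistinctSplitting (P : List Bool → Prop) (w : List Bool) (p : List Bool × List Bool) :
    Prop :=
  p.1 ≠ [] ∧ p.2 ≠ [] ∧ P p.1 ∧ P p.2 ∧ p.1 ≠ p.2 ∧ p.1 ++ p.2 = w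

namespace IsDistinctSplitting

variable {P Q : List Bool → Prop} {w : List Bool} {p : List Bool × List Bool}

theorem ne_nil (h : IsDistinctSplitting P w p) : w ≠ [] := by
  rw [← h.2.2.2.2.2]
  exact List.append_ne_nil_of_left_ne_nil h.1 _

theorem length_add (h : IsDistinctSplitting P w p) : p.1.length + p.2.length = w.length := by
  rw [← h.2.2.2.2.2, List.length_append]

theorem length_fst_lt (h : IsDistinctSplitting P w p) : p.1.length < w.length := by
  have hpos := List.length_pos_iff.mpr h.2.1
  have hadd := h.length_add
  omega

theorem length_snd_lt (h : IsDistinctSplitting P w p) : p.2.length < w.length := by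
  have hpos := List.length_pos_iff.mpr h.1
  have hadd := h.length_add
  omega

theorem iff_of_forall_length_lt (hPQ : ∀ u : List Bool, u.length < w.length → (P u ↔ Q u)) :
    IsDistinctSplitting P w p ↔ IsDistinctSplitting Q w p := by
  constructor
  · intro h
    exact ⟨h.1, h.2.1, (hPQ _ h.length_fst_lt).mp h.2.2.1, (hPQ _ h.length_snd_lt).mp h.2.2.2.1,
      h.2.2.2.2⟩
  · intro h
    exact ⟨h.1, h.2.1, (hPQ _ h.length_fst_lt).mpr h.2.2.1, (hPQ _ h.length_snd_lt).mpr h.2.2.2.1,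
      h.2.2.2.2⟩

end IsDistinctSplitting

theorem ulamN_succ_iff (n : ℕ) (w : List Bool) :
    UlamN (n + 1) w ↔
      w = [false] ∨ w = [true] ∨ ∃! p, IsDistinctSplitting (UlamN n) w p :=
  Iff.rfl

theorem not_ulamN_nil_s18 (m : ℕ) : ¬ UlamN m [] := by
  cases m with
  | zero => exact id
  | succ m =>
    rw [ulamN_succ_iff]
    rintro (h | h | ⟨p, hp, -⟩)
    · exact List.cons_ne_nil _ _ h.symm
    · exact List.cons_ne_nil _ _ h.symm
    · exact hp.ne_nil rfl

theorem ulamN_iff_ulamN {m k : ℕ} {w : List Bool} (hm : w.length ≤ m) (hk : w.length ≤ k) :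
    UlamN m w ↔ UlamN k w := by
  induction m generalizing k w with
  | zero =>
    rw [List.eq_nil_of_length_eq_zero (Nat.le_zero.mp hm)]
    simp only [not_ulamN_nil_s18]
  | succ m ih =>
    rcases w with _ | ⟨b, t⟩
    · simp only [not_ulamN_nil_s18]
    simp only [List.length_cons] at hm hk
    obtain ⟨k, rfl⟩ : ∃ k', k = k' + 1 := ⟨k - 1, by omega⟩
    refine or_congr_right (or_congr_right (existsUnique_congr fun p =>
      IsDistinctSplitting.iff_of_forall_length_lt fun u hu => ?_))
    simp only [List.length_cons] at hu
    exact ih (by omega) (by omega)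

theorem ulamN_iff_isUlam {m : ℕ} {w : List Bool} (h : w.length ≤ m) : UlamN m w ↔ IsUlam w :=
  ulamN_iff_ulamN h le_rfl

theorem isUlam_iff (w : List Bool) :
    IsUlam w ↔ w = [false] ∨ w = [true] ∨ ∃! p, IsDistinctSplitting IsUlam w p := by
  rcases w with _ | ⟨b, t⟩
  · simp only [IsUlam, List.length_nil, not_ulamN_nil_s18, false_iff]
    rintro (h | h | ⟨p, hp, -⟩)
    · exact List.cons_ne_nil _ _ h.symm
    · exact List.cons_ne_nil _ _ h.symm
    · exact hp.ne_nil rfl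
  · refine or_congr_right (or_congr_right (existsUnique_congr fun p =>
      IsDistinctSplitting.iff_of_forall_length_lt fun u hu => ?_))
    exact ulamN_iff_isUlam (Nat.le_of_lt_succ hu)

theorem isUlam_iff_of_two_le_length {w : List Bool} (hw : 2 ≤ w.length) :
    IsUlam w ↔ ∃! p, IsDistinctSplitting IsUlam w p := by
  rw [isUlam_iff]
  constructor
  · rintro (rfl | rfl | h)
    · simp at hw
    · simp at hw
    · exact h
  · exact fun h => Or.inr (Or.inr h)

theorem isUlam_singleton (b : Bool) : IsUlam [b] := by
  cases b
  · exact Or.inl rfl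
  · exact Or.inr (Or.inl rfl)

theorem not_isUlam_replicate (a : Bool) {n : ℕ} (hn : 2 ≤ n) : ¬ IsUlam (List.replicate n a) := by
  induction n using Nat.strong_induction_on with
  | _ n ih =>
    intro hu
    rw [isUlam_iff_of_two_le_length (by simpa using hn)] at hu
    obtain ⟨⟨p₁, p₂⟩, hp, -⟩ := hu
    obtain ⟨hne₁, hne₂, hu₁, hu₂, hne, happ⟩ := hp
    dsimp only at hne₁ hne₂ hu₁ hu₂ hne happ
    obtain ⟨hlen, h₁, h₂⟩ := List.append_eq_replicate_iff.mp happ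
    have hpos₁ := List.length_pos_iff.mpr hne₁
    have hpos₂ := List.length_pos_iff.mpr hne₂
    have hone₁ : p₁.length = 1 := by
      by_contra h
      exact ih p₁.length (by omega) (by omega) (h₁ ▸ hu₁)
    have hone₂ : p₂.length = 1 := by
      by_contra h
      exact ih p₂.length (by omega) (by omega) (h₂ ▸ hu₂)
    apply hne
    rw [h₁, h₂, hone₁, hone₂]

theorem exists_of_append_eq_replicate_append {α : Type*} {p₁ p₂ : List α} {a b : α} {k : ℕ}
    (h : p₁ ++ p₂ = List.replicate k a ++ [b]) (h₂ : p₂ ≠ []) :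
    ∃ i j, i + j = k ∧ p₁ = List.replicate i a ∧ p₂ = List.replicate j a ++ [b] := by
  obtain ⟨q, c, rfl⟩ := (List.eq_nil_or_concat' p₂).resolve_left h₂
  rw [← List.append_assoc] at h
  obtain ⟨hq, hc⟩ := List.append_inj' h rfl
  obtain ⟨hlen, h₁, hq'⟩ := List.append_eq_replicate_iff.mp hq
  exact ⟨p₁.length, q.length, hlen, h₁, by rw [← hq', hc]⟩

theorem isUlam_replicate_append (a : Bool) (k : ℕ) : IsUlam (List.replicate k a ++ [!a]) := by
  induction k with
  | zero => exact isUlam_singleton _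
  | succ k ih =>
    rw [isUlam_iff_of_two_le_length (by simp)]
    refine ⟨([a], List.replicate k a ++ [!a]),
      ⟨by simp, by simp, isUlam_singleton a, ih, fun h => ?_, by simp [List.replicate_succ]⟩, ?_⟩
    · simpa using congrArg (fun l => (!a) ∈ l) h
    · rintro ⟨q₁, q₂⟩ ⟨hne₁, hne₂, hu₁, -, -, happ⟩
      obtain ⟨i, j, hij, rfl, rfl⟩ := exists_of_append_eq_replicate_append happ hne₂
      have hi₀ : i ≠ 0 := by simpa using hne₁
      obtain rfl : i = 1 := by
        by_contra hi₁
        exact not_isUlam_replicate a (by omega) hu₁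
      obtain rfl : j = k := by omega
      rfl

theorem mem_of_isUlam {w : List Bool} (hw : 2 ≤ w.length) (hu : IsUlam w) (b : Bool) : b ∈ w := by
  by_contra hb
  refine not_isUlam_replicate (!b) hw (List.eq_replicate_iff.mpr ⟨rfl, fun c hc => ?_⟩ ▸ hu)
  exact Bool.eq_not_iff.mpr fun e => hb (e ▸ hc)

theorem foldl_binVal_step (w : List Bool) (a : ℕ) :
    w.foldl (fun acc b => 2 * acc + b.toNat) a = a * 2 ^ w.length + binVal w := by
  induction w generalizing a with
  | nil => simp [binVal]
  | cons b t ih =>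
    simp only [binVal, List.foldl_cons, List.length_cons]
    rw [ih, ih]
    ring

theorem binVal_append (u v : List Bool) :
    binVal (u ++ v) = binVal u * 2 ^ v.length + binVal v := by
  rw [binVal, List.foldl_append]
  exact foldl_binVal_step v (binVal u)

theorem binVal_cons (b : Bool) (t : List Bool) :
    binVal (b :: t) = b.toNat * 2 ^ t.length + binVal t := by
  rw [← List.singleton_append, binVal_append]
  cases b <;> rfl

theorem binVal_lt (w : List Bool) : binVal w < 2 ^ w.length := by
  induction w with
  | nil => simp [binVal]
  | cons b t ih =>
    rw [binVal_cons, List.length_cons, pow_succ]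
    cases b <;> simp only [Bool.toNat_false, Bool.toNat_true] <;> omega

theorem one_le_binVal_of_true_mem {w : List Bool} (h : true ∈ w) : 1 ≤ binVal w := by
  induction w with
  | nil => simp at h
  | cons b t ih =>
    rw [binVal_cons]
    cases b
    · simpa using ih (by simpa using h)
    · simp only [Bool.toNat_true, one_mul]
      exact le_add_right Nat.one_le_two_pow

theorem binVal_add_two_le_of_false_mem {w : List Bool} (h : false ∈ w) :
    binVal w + 2 ≤ 2 ^ w.length := by
  induction w with
  | nil => simp at h
  | cons b t ih =>
    rw [binVal_cons, List.length_cons, pow_succ]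
    have hlt := binVal_lt t
    have hpos := @Nat.one_le_two_pow t.length
    cases b
    · simp only [Bool.toNat_false]
      omega
    · have ih' := ih (by simpa using h)
      simp only [Bool.toNat_true]
      omega

theorem binVal_replicate_false (k : ℕ) : binVal (List.replicate k false) = 0 := by
  induction k with
  | zero => rfl
  | succ k ih => rw [List.replicate_succ, binVal_cons, ih]; simp

theorem binVal_replicate_true (k : ℕ) : binVal (List.replicate k true) = 2 ^ k - 1 := by
  induction k with
  | zero => rfl
  | succ k ih =>
    rw [List.replicate_succ, binVal_cons, ih, List.length_replicate, pow_succ]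
    have hpos := @Nat.one_le_two_pow k
    simp only [Bool.toNat_true]
    omega

theorem ulam_extreme_values (n : ℕ) (hn : 2 ≤ n) :
    IsLeast {v : ℕ | ∃ w : List Bool, w.length = n ∧ IsUlam w ∧ binVal w = v} 1 ∧
    IsGreatest {v : ℕ | ∃ w : List Bool, w.length = n ∧ IsUlam w ∧ binVal w = v}
      (2 ^ n - 2) ∧
    IsUlam (List.replicate (n - 1) false ++ [true]) ∧
    binVal (List.replicate (n - 1) false ++ [true]) = 1 ∧
    IsUlam (List.replicate (n - 1) true ++ [false]) ∧
    binVal (List.replicate (n - 1) true ++ [false]) = 2 ^ n - 2 := by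
  have hlen : ∀ a b : Bool, (List.replicate (n - 1) a ++ [b]).length = n := by
    intro a b
    rw [List.length_append, List.length_replicate, List.length_singleton]
    omega
  have hmin : binVal (List.replicate (n - 1) false ++ [true]) = 1 := by
    rw [binVal_append, binVal_replicate_false]
    rfl
  have hmax : binVal (List.replicate (n - 1) true ++ [false]) = 2 ^ n - 2 := by
    have hpow : 2 ^ n = 2 ^ (n - 1) * 2 := by rw [← pow_succ]; congr 1; omega
    have hpos := @Nat.one_le_two_pow (n - 1)
    rw [binVal_append, binVal_replicate_true]
    change (2 ^ (n - 1) - 1) * 2 ^ 1 + 0 = 2 ^ n - 2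
    omega
  refine ⟨⟨⟨_, hlen _ _, isUlam_replicate_append false _, hmin⟩, ?_⟩,
    ⟨⟨_, hlen _ _, isUlam_replicate_append true _, hmax⟩, ?_⟩,
    isUlam_replicate_append false _, hmin, isUlam_replicate_append true _, hmax⟩
  · rintro _ ⟨w, rfl, hu, rfl⟩
    exact one_le_binVal_of_true_mem (mem_of_isUlam hn hu true)
  · rintro _ ⟨w, rfl, hu, rfl⟩
    have := binVal_add_two_le_of_false_mem (mem_of_isUlam hn hu false)
    omega
end
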